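/- arXiv:0912.4235 — 2 statements merged into one kernel-verified Lean document; each statement's English description precedes it below -/
import Mathlib

section
/- In the stratification used in Larman's proof, no facet can be active in three strata V_i, V_{i+1}, V_{i+2}: abstractly, if F is a set of vertices of a connected graph containing vertices at distances δ_{i−1}+1 ≤ a and c ≥ δ_{i+1}+1 from a base vertex u, and F induces a connected subgraph, and δ_{i+1} was chosen as the maximum distance of any vertex sharing a facet with a vertex at distance δ_i + 1, then F contains a vertex at distance δ_i+1 from u, contradicting maximality. Hence each facet is active in at most two consecutive strata, and Σ_{i=1}^{k} n_i ≤ 2n where n_i counts facets active in stratum V_i and n is the total number of facets. -/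
/-!
Distances from `u` change by at most one along an edge, so along any walk inside a facet they
take every intermediate value. If a facet met a stratum `V_j` and a stratum `V_i` with
`i ≥ j + 2`, it would contain a vertex at distance `δ_j + 1`, and by the choice of `δ_{j+1}`
every vertex of the facet would lie within distance `δ_{j+1} ≤ δ_{i-1}`, so it could not
reach `V_i`. Hence the strata a facet meets are at most two consecutive ones, and counting
facet–stratum incidences from the side of the facets gives `Σ n_i ≤ 2n`.
-/

open Finset

namespace SimpleGraph

variable {V : Type*} {G : SimpleGraph V} {u v w : V}

theorem Adj.dist_le_dist_add_one (h : G.Adj v w) : G.dist u w ≤ G.dist u v + 1 := by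
  rcases h.diff_dist_adj (u := u) with h | h | h <;> omega

theorem Walk.exists_mem_support_eq {f : V → ℕ} (hf : ∀ ⦃a b⦄, G.Adj a b → f b ≤ f a + 1)
    {x y : V} (p : G.Walk x y) {m : ℕ} (hx : f x ≤ m) (hy : m ≤ f y) :
    ∃ z ∈ p.support, f z = m := by
  induction p with
  | nil => exact ⟨_, by simp, le_antisymm hx hy⟩
  | @cons x c y h q ih =>
    by_cases hc : f c ≤ m
    · obtain ⟨z, hz, hzm⟩ := ih hc hy
      exact ⟨z, List.mem_cons_of_mem _ hz, hzm⟩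
    · exact ⟨x, List.mem_cons_self, by have := hf h; omega⟩

theorem exists_mem_dist_eq_of_induce_preconnected {s : Set V} (hs : (G.induce s).Preconnected)
    {a b : V} (ha : a ∈ s) (hb : b ∈ s) {m : ℕ} (ham : G.dist u a ≤ m) (hmb : m ≤ G.dist u b) :
    ∃ z ∈ s, G.dist u z = m := by
  obtain ⟨p⟩ := hs ⟨a, ha⟩ ⟨b, hb⟩
  obtain ⟨z, -, hz⟩ := p.exists_mem_support_eq (f := fun z : s ↦ G.dist u z)
    (fun _ _ h ↦ Adj.dist_le_dist_add_one (G := G) h) ham hmb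
  exact ⟨z, z.2, hz⟩

def activeStrata (G : SimpleGraph V) (u : V) (δ : ℕ → ℤ) (k : ℕ) (F : Set V) : Set ℕ :=
  {i | 1 ≤ i ∧ i ≤ k ∧ ∃ v ∈ F, δ (i - 1) < (G.dist u v : ℤ) ∧ (G.dist u v : ℤ) ≤ δ i}

theorem le_add_one_of_mem_activeStrata {δ : ℕ → ℤ} {k : ℕ} {F : Set V}
    (hδ : MonotoneOn δ (Set.Iic k)) (hF : (G.induce F).Preconnected)
    (hmax : ∀ i < k, (∃ w ∈ F, (G.dist u w : ℤ) = δ i + 1) →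
      ∀ v ∈ F, (G.dist u v : ℤ) ≤ δ (i + 1))
    {j i : ℕ} (hj : j ∈ activeStrata G u δ k F) (hi : i ∈ activeStrata G u δ k F) :
    i ≤ j + 1 := by
  by_contra! hji
  obtain ⟨-, hjk, v₁, hv₁, -, hv₁j⟩ := hj
  obtain ⟨-, hik, v₂, hv₂, hv₂i, -⟩ := hi
  have hδ_le : δ (j + 1) ≤ δ (i - 1) :=
    hδ (Set.mem_Iic.2 (by omega)) (Set.mem_Iic.2 (by omega)) (by omega)
  have hδj : δ j ≤ δ (j + 1) :=
    hδ (Set.mem_Iic.2 (by omega)) (Set.mem_Iic.2 (by omega)) (by omega)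
  lift δ j + 1 to ℕ using (by omega) with m hm
  obtain ⟨w, hw, hwm⟩ := exists_mem_dist_eq_of_induce_preconnected (u := u) hF hv₁ hv₂
    (m := m) (by omega) (by omega)
  have := hmax j (by omega) ⟨w, hw, by omega⟩ v₂ hv₂
  omega

end SimpleGraph

theorem Set.exists_subset_pair_of_forall_le_add_one {S : Set ℕ}
    (h : ∀ a ∈ S, ∀ b ∈ S, b ≤ a + 1) : ∃ j, S ⊆ {j, j + 1} := by
  rcases S.eq_empty_or_nonempty with rfl | hS
  · exact ⟨0, empty_subset _⟩
  refine ⟨sInf S, fun b hb ↦ ?_⟩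
  have := h _ (Nat.sInf_mem hS) b hb
  have := Nat.sInf_le hb
  simp only [mem_insert_iff, mem_singleton_iff]
  omega

theorem Finset.sum_ncard_le_mul_card {α ι : Type*} [Fintype ι] (s : Finset α) (r : α → ι → Prop)
    [∀ a f, Decidable (r a f)] {c : ℕ} (h : ∀ f, #{a ∈ s | r a f} ≤ c) :
    ∑ a ∈ s, {f | r a f}.ncard ≤ c * Fintype.card ι := by
  calc ∑ a ∈ s, {f | r a f}.ncard
      = ∑ a ∈ s, #(univ.bipartiteAbove r a) := by
        refine sum_congr rfl fun a _ ↦ ?_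
        rw [Set.ncard_eq_toFinset_card']
        simp [bipartiteAbove]
    _ = ∑ f, #(s.bipartiteBelow r f) := sum_card_bipartiteAbove_eq_sum_card_bipartiteBelow _
    _ ≤ ∑ _f : ι, c := sum_le_sum fun f _ ↦ h f
    _ = c * Fintype.card ι := by simp [mul_comm]

theorem stmt_11_general {V ι : Type*} [Fintype ι] (G : SimpleGraph V)
    (u : V) (k n : ℕ) (δ : ℕ → ℤ) (Fac : ι → Set V)
    (hn : Fintype.card ι = n)
    (hδmono : ∀ i < k, δ i < δ (i + 1))
    (hFconn : ∀ f : ι, (SimpleGraph.induce (Fac f) G).Connected)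
    (hmax : ∀ i < k, ∀ f : ι, (∃ w ∈ Fac f, (G.dist u w : ℤ) = δ i + 1) →
      ∀ v ∈ Fac f, (G.dist u v : ℤ) ≤ δ (i + 1)) :
    (∀ f : ι, ∃ j : ℕ,
      {i : ℕ | 1 ≤ i ∧ i ≤ k ∧
        ∃ v ∈ Fac f, δ (i - 1) < (G.dist u v : ℤ) ∧ (G.dist u v : ℤ) ≤ δ i}
        ⊆ {j, j + 1}) ∧
    ∑ i ∈ Icc 1 k,
        {f : ι | ∃ v ∈ Fac f, δ (i - 1) < (G.dist u v : ℤ) ∧ (G.dist u v : ℤ) ≤ δ i}.ncard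
      ≤ 2 * n := by
  classical
  have hδ : MonotoneOn δ (Set.Iic k) := (strictMonoOn_Iic_of_lt_succ hδmono).monotoneOn
  have two_strata (f : ι) : ∃ j, G.activeStrata u δ k (Fac f) ⊆ {j, j + 1} :=
    Set.exists_subset_pair_of_forall_le_add_one fun _ ha _ hb ↦
      SimpleGraph.le_add_one_of_mem_activeStrata hδ (hFconn f).preconnected
        (fun i hi ↦ hmax i hi f) ha hb
  refine ⟨two_strata, hn ▸ sum_ncard_le_mul_card _ _ fun f ↦ ?_⟩
  obtain ⟨j, hj⟩ := two_strata f
  calc #{i ∈ Icc 1 k | ∃ v ∈ Fac f, δ (i - 1) < (G.dist u v : ℤ) ∧ (G.dist u v : ℤ) ≤ δ i}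
      ≤ #{j, j + 1} := card_le_card fun i hi ↦ by
        simp only [mem_filter, mem_Icc] at hi
        simpa using hj ⟨hi.1.1, hi.1.2, hi.2⟩
    _ ≤ 2 := card_le_two

/-- Larman's stratification: vertices of the polytope are stratified by distance to
a base vertex `u` into strata `V_i = {v : δ_{i−1} < d(u,v) ≤ δ_i}` (with `δ_0 = −1`),
where `δ_{i+1}` is the maximal distance of any vertex sharing a facet with a vertex at
distance `δ_i + 1`.  Since each facet induces a connected subgraph, no facet is active
in three strata: each facet is active in at most two consecutive strata, and hence
`Σ_{i=1}^{k} n_i ≤ 2n`, where `n_i` is the number of facets active in stratum `V_i`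
and `n` is the total number of facets. -/
theorem stmt_11 {V ι : Type*} [Fintype ι] (G : SimpleGraph V) (hG : G.Connected)
    (u : V) (k n : ℕ) (δ : ℕ → ℤ) (Fac : ι → Set V)
    (hn : Fintype.card ι = n)
    (hδ0 : δ 0 = -1)
    (hδmono : ∀ i < k, δ i < δ (i + 1))
    (hFconn : ∀ f : ι, (SimpleGraph.induce (Fac f) G).Connected)
    (hmax : ∀ i < k, ∀ f : ι, (∃ w ∈ Fac f, (G.dist u w : ℤ) = δ i + 1) →
      ∀ v ∈ Fac f, (G.dist u v : ℤ) ≤ δ (i + 1)) :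
    (∀ f : ι, ∃ j : ℕ,
      {i : ℕ | 1 ≤ i ∧ i ≤ k ∧
        ∃ v ∈ Fac f, δ (i - 1) < (G.dist u v : ℤ) ∧ (G.dist u v : ℤ) ≤ δ i}
        ⊆ {j, j + 1}) ∧
    ∑ i ∈ Icc 1 k,
        {f : ι | ∃ v ∈ Fac f, δ (i - 1) < (G.dist u v : ℤ) ∧ (G.dist u v : ℤ) ≤ δ i}.ncard
      ≤ 2 * n :=
  stmt_11_general G u k n δ Fac hn hδmono hFconn hmax
end

section
/- With the notation of the one-point suspension: iterating the one-point suspension k times on a vertex w of a simplicial complex L yields the complex S_w(L)^{(k)} = (ast_L(w) ∗ ∂Δ_k) ∪ (lk_L(w) ∗ Δ_k), where Δ_k is the k-simplex on new vertices w_1,...,w_{k+1} and ∂Δ_k its boundary complex. In particular, for k = 1 this recovers the one-point suspension formula. -/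
/-!
Write `X_F(w, A) = (ast_F(w) ∗ ∂A) ∪ (lk_F(w) ∗ A)` for a simplex `A` of fresh vertices. A face of
`X_F(w, A)` is determined by its trace `u \ A`, a face of `F` avoiding `w`, and by whether it
contains all of `A`. The one-point suspension at `w` with new vertices `a ≠ b` is literally
`X_F(w, {a, b})`, and suspending `X_F(w, A)` once more at a vertex `p ∈ A` with a new vertex `q`
gives `X_{X_F(w, A)}(p, {p, q})`; comparing traces shows that this is `X_F(w, A ∪ {q})`.
-/

open Finset

variable {V : Type*} [DecidableEq V]

/-- One-point suspension of a complex `F` (a set of faces over an ambient vertex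
type) at a vertex `w`, with `a, b` the two new replacement vertices:
`(ast_F(w) ∗ a) ∪ (ast_F(w) ∗ b) ∪ (lk_F(w) ∗ {a,b})`. -/
def sus (F : Set (Finset V)) (w a b : V) : Set (Finset V) :=
  {u | ∃ s : Finset V, w ∉ s ∧
    ((s ∈ F ∧ ∃ t ⊆ ({a} : Finset V), u = s ∪ t) ∨
     (s ∈ F ∧ ∃ t ⊆ ({b} : Finset V), u = s ∪ t) ∨
     (insert w s ∈ F ∧ ∃ t ⊆ ({a, b} : Finset V), u = s ∪ t))}

/-- The `k`-fold iterated one-point suspension of `F` at `w`, using the fresh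
vertices `v 1, v 2, ...`: first suspend at `w` creating `v 1, v 2`, then suspend
at the newest vertex each time. -/
def iterSus (F : Set (Finset V)) (w : V) (v : ℕ → V) : ℕ → Set (Finset V)
  | 0 => F
  | 1 => sus F w (v 1) (v 2)
  | (k + 2) => sus (iterSus F w v (k + 1)) (v (k + 2)) (v (k + 2)) (v (k + 3))

/-- `(ast_F(w) ∗ ∂A) ∪ (lk_F(w) ∗ A)`, with `A` read as a simplex. -/
def simplexSuspension (F : Set (Finset V)) (w : V) (A : Finset V) : Set (Finset V) :=
  {u | ∃ s : Finset V, ∃ t ⊆ A, w ∉ s ∧ u = s ∪ t ∧ ((s ∈ F ∧ t ≠ A) ∨ insert w s ∈ F)}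

section

variable {F : Set (Finset V)} {w : V}

theorem sus_eq_simplexSuspension {a b : V} (hab : a ≠ b) :
    sus F w a b = simplexSuspension F w {a, b} := by
  ext u
  simp only [sus, simplexSuspension, Set.mem_ofPred_eq]
  constructor
  · rintro ⟨s, hws, ⟨hs, t, ht, rfl⟩ | ⟨hs, t, ht, rfl⟩ | ⟨hs, t, ht, rfl⟩⟩
    · refine ⟨s, t, ht.trans (by simp), hws, rfl, .inl ⟨hs, fun h => hab ?_⟩⟩
      exact (mem_singleton.1 (ht (h ▸ mem_insert_of_mem (mem_singleton_self b)))).symm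
    · refine ⟨s, t, ht.trans (by simp), hws, rfl, .inl ⟨hs, fun h => hab ?_⟩⟩
      simpa using ht (h ▸ mem_insert_self a {b})
    · exact ⟨s, t, ht, hws, rfl, .inr hs⟩
  · rintro ⟨s, t, ht, hws, rfl, ⟨hs, hne⟩ | hs⟩
    · refine ⟨s, hws, ?_⟩
      by_cases hb : b ∈ t
      · refine .inr (.inl ⟨hs, t, fun x hx => ?_, rfl⟩)
        have ha : a ∉ t := fun ha => hne (Subset.antisymm ht (by simp [insert_subset_iff, ha, hb]))
        exact (mem_insert.1 (ht hx)).resolve_left fun h => ha (h ▸ hx)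
      · refine .inl ⟨hs, t, fun x hx => ?_, rfl⟩
        exact mem_singleton.2 <|
          (mem_insert.1 (ht hx)).resolve_right fun h => hb (mem_singleton.1 h ▸ hx)
    · exact ⟨s, hws, .inr (.inr ⟨hs, t, ht, rfl⟩)⟩

-- `A` may contain `w`, as it does when the suspension at `p` uses `p` as a new vertex.
theorem mem_simplexSuspension_iff {A u : Finset V} (hA : ∀ s ∈ F, Disjoint (s.erase w) A) :
    u ∈ simplexSuspension F w A ↔
      w ∉ u \ A ∧ ((u \ A ∈ F ∧ ¬A ⊆ u) ∨ insert w (u \ A) ∈ F) := by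
  constructor
  · rintro ⟨s, t, ht, hws, rfl, h⟩
    have hsA : Disjoint s A := by
      rcases h with ⟨hs, -⟩ | hs
      · simpa [erase_eq_of_notMem hws] using hA s hs
      · simpa [erase_insert hws] using hA _ hs
    have htrace : (s ∪ t) \ A = s := by
      rw [union_sdiff_distrib, sdiff_eq_empty_iff_subset.2 ht, union_empty, hsA.sdiff_eq_left]
    rw [htrace]
    refine ⟨hws, h.imp_left fun ⟨hs, hne⟩ => ⟨hs, fun hAu => hne (Subset.antisymm ht ?_)⟩⟩
    exact fun x hx => (mem_union.1 (hAu hx)).resolve_left (disjoint_right.1 hsA hx)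
  · rintro ⟨hw, h⟩
    refine ⟨u \ A, u ∩ A, inter_subset_right, hw, (sdiff_union_inter u A).symm, ?_⟩
    exact h.imp_left fun ⟨hs, hAu⟩ => ⟨hs, fun he => hAu (he ▸ inter_subset_left)⟩

theorem simplexSuspension_simplexSuspension {A : Finset V} {p q : V}
    (hdown : ∀ s ∈ F, ∀ t ⊆ s, t ∈ F) (hfresh : ∀ s ∈ F, Disjoint s (insert q A))
    (hp : p ∈ A) (hq : q ∉ A) :
    simplexSuspension (simplexSuspension F w A) p {p, q} =
      simplexSuspension F w (insert q A) := by
  have hfreshA : ∀ s ∈ F, Disjoint (s.erase w) A := fun s hs =>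
    (hfresh s hs).mono (erase_subset w s) (subset_insert q A)
  have hfreshQA : ∀ s ∈ F, Disjoint (s.erase w) (insert q A) := fun s hs =>
    (hfresh s hs).mono_left (erase_subset w s)
  have hfreshX : ∀ s ∈ simplexSuspension F w A, Disjoint (s.erase p) {p, q} := by
    intro s hs
    have hqs : q ∉ s := fun hqs => by
      have hqsA : q ∈ s \ A := mem_sdiff.2 ⟨hqs, hq⟩
      rcases ((mem_simplexSuspension_iff hfreshA).1 hs).2 with ⟨hsF, -⟩ | hsF
      · exact disjoint_left.1 (hfresh _ hsF) hqsA (mem_insert_self q A)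
      · exact disjoint_left.1 (hfresh _ hsF) (mem_insert_of_mem hqsA) (mem_insert_self q A)
    simp [hqs]
  ext u
  have htrace : (u \ {p, q}) \ A = u \ insert q A := by
    ext x
    by_cases hx : x = p <;> simp [hx, hp, and_assoc]
  have htrace' : insert p (u \ {p, q}) \ A = u \ insert q A := by
    rw [insert_sdiff_of_mem _ hp, htrace]
  have hA : ¬A ⊆ u \ {p, q} := fun h => by simpa using h hp
  have hA' : A ⊆ insert p (u \ {p, q}) ↔ A.erase p ⊆ u := by
    rw [subset_insert_iff, subset_sdiff, and_iff_left]
    simp [disjoint_insert_right, hq]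
  have hB : insert q A ⊆ u ↔ q ∈ u ∧ p ∈ u ∧ A.erase p ⊆ u := by
    rw [insert_subset_iff, ← insert_erase hp, insert_subset_iff, erase_insert_eq_erase, erase_idem]
  have hpq : {p, q} ⊆ u ↔ p ∈ u ∧ q ∈ u := by simp [insert_subset_iff]
  have hdown' : insert w (u \ insert q A) ∈ F → u \ insert q A ∈ F :=
    fun h => hdown _ h _ (subset_insert w _)
  rw [mem_simplexSuspension_iff hfreshX, mem_simplexSuspension_iff hfreshA,
    mem_simplexSuspension_iff hfreshA, mem_simplexSuspension_iff hfreshQA, htrace, htrace', hA', hB,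
    hpq]
  have hpu : p ∉ u \ {p, q} := by simp
  simp only [hpu, hA, not_false_eq_true, true_and, and_true]
  clear * - hdown'
  tauto

theorem iterSus_eq_simplexSuspension {v : ℕ → V} (hdown : ∀ s ∈ F, ∀ t ⊆ s, t ∈ F)
    (hinj : Function.Injective v) (hfresh : ∀ s ∈ F, ∀ i, v i ∉ s) (k : ℕ) :
    iterSus F w v (k + 1) = simplexSuspension F w ((Icc 1 (k + 2)).image v) := by
  have hdisj : ∀ n, ∀ s ∈ F, Disjoint s ((Icc 1 n).image v) := fun n s hs =>
    disjoint_left.2 fun x hx hxv => by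
      obtain ⟨i, -, rfl⟩ := mem_image.1 hxv
      exact hfresh s hs i hx
  induction k with
  | zero =>
    have hIcc : (Icc 1 2).image v = {v 1, v 2} := by simp [show Icc 1 2 = {1, 2} by decide]
    rw [hIcc]
    exact sus_eq_simplexSuspension (hinj.ne (by decide))
  | succ k ih =>
    have hIcc : (Icc 1 (k + 3)).image v = insert (v (k + 3)) ((Icc 1 (k + 2)).image v) := by
      rw [← image_insert]
      exact congrArg (image v) (insert_Icc_right_eq_Icc_add_one (by omega)).symm
    show sus (iterSus F w v (k + 1)) (v (k + 2)) (v (k + 2)) (v (k + 3)) = _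
    rw [ih, sus_eq_simplexSuspension (hinj.ne (by omega)), hIcc]
    exact simplexSuspension_simplexSuspension hdown (fun s hs => hIcc ▸ hdisj (k + 3) s hs)
      (mem_image_of_mem v (by simp)) (by simp [hinj.eq_iff])

end

theorem stmt_14_general (F : Set (Finset V)) (hdown : ∀ s ∈ F, ∀ t ⊆ s, t ∈ F)
    (w : V) (v : ℕ → V) (hinj : Function.Injective v)
    (hfresh : ∀ s ∈ F, ∀ i, v i ∉ s) :
    ∀ k, 1 ≤ k →
      iterSus F w v k =
        {u | ∃ s : Finset V, ∃ t ⊆ (Icc 1 (k + 1)).image v, w ∉ s ∧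
          u = s ∪ t ∧
          ((s ∈ F ∧ t ≠ (Icc 1 (k + 1)).image v) ∨ insert w s ∈ F)} := by
  rintro k hk
  obtain ⟨k, rfl⟩ := Nat.exists_eq_add_of_le' hk
  exact iterSus_eq_simplexSuspension hdown hinj hfresh k

/-- Iterating the one-point suspension `k` times yields
`S_w(L)^{(k)} = (ast_L(w) ∗ ∂Δ_k) ∪ (lk_L(w) ∗ Δ_k)`, where `Δ_k` is the
`k`-simplex on the new vertices `w_1, ..., w_{k+1}` and `∂Δ_k` is its boundary.
(For `k = 1` this is the one-point suspension formula.) -/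
theorem stmt_14 (F : Set (Finset V)) (hdown : ∀ s ∈ F, ∀ t ⊆ s, t ∈ F)
    (w : V) (v : ℕ → V) (hinj : Function.Injective v)
    (hvw : ∀ i, v i ≠ w) (hfresh : ∀ s ∈ F, ∀ i, v i ∉ s) :
    ∀ k, 1 ≤ k →
      iterSus F w v k =
        {u | ∃ s : Finset V, ∃ t ⊆ (Icc 1 (k + 1)).image v, w ∉ s ∧
          u = s ∪ t ∧
          ((s ∈ F ∧ t ≠ (Icc 1 (k + 1)).image v) ∨ insert w s ∈ F)} :=
  stmt_14_general F hdown w v hinj hfresh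
end
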